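/- arXiv:2605.07130 — 6 statements merged into one kernel-verified Lean document; each statement's English description precedes it below -/
import Mathlib

section
/- For any real number λ with 0 ≤ λ ≤ 1, the quantity (1 + ((3/2)² − λ²) / max{λ², (1−λ)²}) is at most 9, with equality attained at λ = 1/2. -/
/-! Split at `l = 1/2`: for `l ≥ 1/2` the maximum is `l²` and `9/4 - l² ≤ 8 l²` says `l² ≥ 1/4`;
for `l ≤ 1/2` it is `(1 - l)²`, and `8 (1 - l)² - (9/4 - l²) = (l - 1/2) (9 l - 23/2)` is a product
of two nonpositive factors. -/

lemma one_quarter_le_max_sq_sq_one_sub (l : ℝ) : 1 / 4 ≤ max (l ^ 2) ((1 - l) ^ 2) := by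
  rcases le_total l (1 / 2) with hl | hl
  · exact le_max_of_le_right (by nlinarith)
  · exact le_max_of_le_left (by nlinarith)

lemma nine_quarters_sub_sq_le_eight_mul_max (l : ℝ) :
    (3 / 2) ^ 2 - l ^ 2 ≤ 8 * max (l ^ 2) ((1 - l) ^ 2) := by
  rcases le_total l (1 / 2) with hl | hl
  · have hfactor : 0 ≤ (l - 1 / 2) * (9 * l - 23 / 2) :=
      mul_nonneg_of_nonpos_of_nonpos (by linarith) (by linarith)
    nlinarith [le_max_right (l ^ 2) ((1 - l) ^ 2)]
  · nlinarith [le_max_left (l ^ 2) ((1 - l) ^ 2)]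

theorem stmt_0 :
    (∀ l : ℝ, 0 ≤ l → l ≤ 1 →
      1 + ((3/2)^2 - l^2) / max (l^2) ((1-l)^2) ≤ 9) ∧
    1 + ((3/2)^2 - (1/2:ℝ)^2) / max ((1/2:ℝ)^2) ((1-(1/2:ℝ))^2) = 9 := by
  refine ⟨fun l _ _ => ?_, by norm_num⟩
  have hmax : 0 < max (l ^ 2) ((1 - l) ^ 2) :=
    lt_of_lt_of_le (by norm_num) (one_quarter_le_max_sq_sq_one_sub l)
  have hratio := (div_le_iff₀ hmax).2 (nine_quarters_sub_sq_le_eight_mul_max l)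
  linarith
end

section
/- For all reals δ > 3/2 and 0 ≤ λ < δ − 1, we have 1 + (δ² − λ²)/max{(1−λ)², (δ−1)²} ≤ 9. -/
/-! The bound is tight at `δ = 3/2`, `l = 1/2`, where both squares equal `1/4`. Bounding the
maximum below by the weighted mean `(2 (1 - l)² + 6 (δ - 1)²) / 8` reduces it to a polynomial
inequality; the weights `1/4, 3/4` are chosen so that the mean is tangent to `δ² - l²` there. -/

/-- With `u = δ - 3/2` and `v = δ - 1 - l`, the difference of the two sides is
`3 (u - v)² + 5 u² + 2 u + v`. -/
lemma sq_sub_sq_le_weighted_sq_add (δ l : ℝ) (hδ : 3/2 < δ) (hl : l < δ - 1) :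
    δ^2 - l^2 ≤ 2 * (1 - l)^2 + 6 * (δ - 1)^2 := by
  linarith [sq_nonneg (l - 1/2), sq_nonneg (δ - 3/2)]

theorem stmt_2_general (δ l : ℝ) (hδ : 3/2 < δ) (hl : l < δ - 1) :
    1 + (δ^2 - l^2) / max ((1-l)^2) ((δ-1)^2) ≤ 9 := by
  have hmax_pos : 0 < max ((1-l)^2) ((δ-1)^2) :=
    lt_max_of_lt_right (pow_pos (by linarith) 2)
  have hquot : (δ^2 - l^2) / max ((1-l)^2) ((δ-1)^2) ≤ 8 := by
    rw [div_le_iff₀ hmax_pos]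
    linarith [sq_sub_sq_le_weighted_sq_add δ l hδ hl,
      le_max_left ((1-l)^2) ((δ-1)^2), le_max_right ((1-l)^2) ((δ-1)^2)]
  linarith

theorem stmt_2 (δ l : ℝ) (hδ : 3/2 < δ) (hl0 : 0 ≤ l) (hl : l < δ - 1) :
    1 + (δ^2 - l^2) / max ((1-l)^2) ((δ-1)^2) ≤ 9 :=
  stmt_2_general δ l hδ hl
end

section
/- For any fixed c > 1, the function λ ↦ (x² − λ²)/max{λ², ((c−1)/2)·(1−λ)²} over λ ∈ [0,1] (with x ≥ 1 fixed) is maximized at λ* = √((c−1)/2)/(1 + √((c−1)/2)), where it takes the value ((1+√((c−1)/2))²/((c−1)/2))·x² − 1. -/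
lemma stmt_5_aux (a m l x : ℝ) (ha : 0 < a) (hx2 : 1 ≤ x^2) (hl0 : 0 ≤ l)
    (hlm : l ≤ m) (hm1 : m < 1) :
    (x^2 - l^2) * (a * (1-m)^2) ≤ (x^2 - m^2) * (a * (1-l)^2) := by
  have h : (x^2 - l^2) * ((1-m)^2) ≤ (x^2 - m^2) * ((1-l)^2) := by
    nlinarith [mul_nonneg (sub_nonneg.mpr hlm)
        (mul_nonneg (by linarith : (0:ℝ) ≤ 1 - l) (by linarith : (0:ℝ) ≤ 1 - m)),
      mul_nonneg (mul_nonneg (sub_nonneg.mpr hlm) (sub_nonneg.mpr hx2))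
        (by nlinarith : (0:ℝ) ≤ 2 - l - m)]
  nlinarith [mul_le_mul_of_nonneg_left h ha.le]

theorem stmt_5 (c x : ℝ) (hc : 1 < c) (hx : 1 ≤ x) :
    (∀ l ∈ Set.Icc (0:ℝ) 1,
      (x^2 - l^2) / max (l^2) (((c-1)/2) * (1-l)^2) ≤
      (x^2 - (Real.sqrt ((c-1)/2) / (1 + Real.sqrt ((c-1)/2)))^2) /
        max ((Real.sqrt ((c-1)/2) / (1 + Real.sqrt ((c-1)/2)))^2)
          (((c-1)/2) * (1 - Real.sqrt ((c-1)/2) / (1 + Real.sqrt ((c-1)/2)))^2)) ∧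
    (x^2 - (Real.sqrt ((c-1)/2) / (1 + Real.sqrt ((c-1)/2)))^2) /
        max ((Real.sqrt ((c-1)/2) / (1 + Real.sqrt ((c-1)/2)))^2)
          (((c-1)/2) * (1 - Real.sqrt ((c-1)/2) / (1 + Real.sqrt ((c-1)/2)))^2)
      = ((1 + Real.sqrt ((c-1)/2))^2 / ((c-1)/2)) * x^2 - 1 := by
  set s := Real.sqrt ((c-1)/2) with hs_def
  have hhalf : (0:ℝ) < (c-1)/2 := by linarith
  have hs : 0 < s := Real.sqrt_pos.mpr hhalf
  have hs2 : s^2 = (c-1)/2 := Real.sq_sqrt hhalf.le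
  have h1s : (0:ℝ) < 1 + s := by linarith
  set m := s / (1 + s) with hm_def
  have hm0 : 0 < m := div_pos hs h1s
  have hm1 : m < 1 := by
    rw [hm_def, div_lt_one h1s]; linarith
  have hkey : ((c-1)/2) * (1 - m)^2 = m^2 := by
    have h1m : 1 - m = 1 / (1 + s) := by field_simp [hm_def]; rw [hm_def, sub_mul, div_mul_cancel₀ _ h1s.ne']; ring
    rw [h1m, hm_def, ← hs2]
    field_simp
  have hmax : max (m^2) (((c-1)/2) * (1 - m)^2) = m^2 := by
    rw [hkey, max_self]
  have hm2s : m^2 = s^2 / (1+s)^2 := by rw [hm_def, div_pow]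
  clear hm_def hs_def
  clear_value m s
  constructor
  · intro l hl
    obtain ⟨hl0, hl1⟩ := hl
    rw [hmax]
    have hm2 : (0:ℝ) < m^2 := by positivity
    have hnum : 0 ≤ x^2 - l^2 := by nlinarith
    have hx2 : 1 ≤ x^2 := by nlinarith
    rcases le_total m l with hcase | hcase
    · have hl2 : (0:ℝ) < l^2 := by nlinarith
      have h1 : (x^2 - l^2) / max (l^2) (((c-1)/2) * (1-l)^2) ≤ (x^2 - l^2) / l^2 :=
        div_le_div_of_nonneg_left hnum hl2 (le_max_left _ _)
      have h2 : (x^2 - l^2) / l^2 ≤ (x^2 - m^2) / m^2 := by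
        rw [div_le_div_iff₀ hl2 hm2]
        nlinarith [mul_nonneg (sq_nonneg x) (by nlinarith : (0:ℝ) ≤ l^2 - m^2)]
      linarith
    · have hden : (0:ℝ) < ((c-1)/2) * (1-l)^2 := by
        have : 0 < 1 - l := by linarith
        positivity
      have h1 : (x^2 - l^2) / max (l^2) (((c-1)/2) * (1-l)^2) ≤
          (x^2 - l^2) / (((c-1)/2) * (1-l)^2) :=
        div_le_div_of_nonneg_left hnum hden (le_max_right _ _)
      have h2 : (x^2 - l^2) / (((c-1)/2) * (1-l)^2) ≤ (x^2 - m^2) / m^2 := by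
        rw [div_le_div_iff₀ hden hm2]
        calc (x^2 - l^2) * m^2 = (x^2 - l^2) * (((c-1)/2) * (1-m)^2) := by rw [hkey]
          _ ≤ (x^2 - m^2) * (((c-1)/2) * (1-l)^2) :=
              stmt_5_aux _ _ _ _ hhalf hx2 hl0 hcase hm1
      linarith
  · rw [hmax, ← hs2, hm2s]
    have hs2ne : s^2 ≠ 0 := by positivity
    field_simp
end

section
/- For every real c > 1, the polynomial equation [(1 + √(c−1))²·x² − (c−1)]·(x−1)² − (2x − 1) = 0 has a unique real root x* with x* > 1, and at c = 3 the resulting value Ψ(3) = ((1+√2)²/2)·(x*)² is strictly less than 6. -/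
/-!
For `x > 1`, dividing `(A x² - B)(x - 1)² - (2x - 1)` by `(x - 1)²` and using
`(2x - 1)/(x - 1)² = (x/(x - 1))² - 1` leaves `A x² - B + 1 - (x/(x - 1))²`, which is strictly
increasing on `(1, ∞)` when `A > 0` because `x/(x - 1)` decreases there. The polynomial is `-1`
at `x = 1` and tends to `+∞`, so it has exactly one root beyond `1`, and any point beyond `1`
where it is positive bounds that root from above. At `c = 3`, positivity at `1.434` gives
`Ψ(3) < (3 + 2√2)/2 · 1.434² < 6`.
-/

open Set Filter

namespace Threshold

def poly (A B x : ℝ) : ℝ := (A * x ^ 2 - B) * (x - 1) ^ 2 - (2 * x - 1)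

noncomputable def reduced (A B x : ℝ) : ℝ := A * x ^ 2 - B + 1 - (x / (x - 1)) ^ 2

variable {A B x : ℝ}

lemma poly_eq_reduced_mul (hx : x ≠ 1) : poly A B x = reduced A B x * (x - 1) ^ 2 := by
  have : x - 1 ≠ 0 := sub_ne_zero.mpr hx
  unfold poly reduced
  field_simp
  ring

lemma poly_pos_iff (hx : 1 < x) : 0 < poly A B x ↔ 0 < reduced A B x := by
  rw [poly_eq_reduced_mul hx.ne', mul_pos_iff_of_pos_right (by nlinarith)]

lemma poly_eq_zero_iff (hx : 1 < x) : poly A B x = 0 ↔ reduced A B x = 0 := by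
  rw [poly_eq_reduced_mul hx.ne', mul_eq_zero, or_iff_left (by nlinarith)]

lemma strictMonoOn_reduced (hA : 0 < A) : StrictMonoOn (reduced A B) (Ioi 1) := by
  intro x (hx : 1 < x) y (hy : 1 < y) hxy
  have hratio : y / (y - 1) < x / (x - 1) := by
    rw [div_lt_div_iff₀ (by linarith) (by linarith)]
    linarith
  have hratio_pos : 0 < y / (y - 1) := div_pos (by linarith) (by linarith)
  have hsq : x ^ 2 < y ^ 2 := by nlinarith
  unfold reduced
  nlinarith [mul_lt_mul_of_pos_left hsq hA]

lemma poly_pos_of_three_lt (hx : 2 ≤ x) (h : 3 < A * x ^ 2 - B) : 0 < poly A B x := by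
  have hsq : 0 < (x - 1) ^ 2 := by nlinarith
  have hlead : 3 * (x - 1) ^ 2 < (A * x ^ 2 - B) * (x - 1) ^ 2 := mul_lt_mul_of_pos_right h hsq
  unfold poly
  nlinarith

lemma exists_poly_pos (hA : 0 < A) (B : ℝ) : ∃ r, 1 < r ∧ 0 < poly A B r := by
  have hlim : Tendsto (fun r : ℝ => A * r ^ 2 - B) atTop atTop :=
    tendsto_atTop_add_const_right _ _ ((tendsto_pow_atTop two_ne_zero).const_mul_atTop hA)
  obtain ⟨r, hr, hbig⟩ := ((eventually_ge_atTop 2).and (hlim.eventually_gt_atTop 3)).exists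
  exact ⟨r, by linarith, poly_pos_of_three_lt hr hbig⟩

lemma existsUnique_root (hA : 0 < A) (B : ℝ) : ∃! x, 1 < x ∧ poly A B x = 0 := by
  obtain ⟨r, hr, hpos⟩ := exists_poly_pos hA B
  have hcont : ContinuousOn (poly A B) (Icc 1 r) := by
    unfold poly
    fun_prop
  have hzero : (0 : ℝ) ∈ Ioo (poly A B 1) (poly A B r) := ⟨by norm_num [poly], hpos⟩
  obtain ⟨x, ⟨hx, -⟩, hroot⟩ := intermediate_value_Ioo hr.le hcont hzero
  refine ⟨x, ⟨hx, hroot⟩, fun y ⟨hy, hyroot⟩ => (strictMonoOn_reduced (B := B) hA).injOn hy hx ?_⟩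
  rw [(poly_eq_zero_iff hy).mp hyroot, (poly_eq_zero_iff hx).mp hroot]

lemma root_lt_of_poly_pos (hA : 0 < A) (hx : 1 < x) (hroot : poly A B x = 0) {r : ℝ}
    (hr : 1 < r) (hpos : 0 < poly A B r) : x < r := by
  rw [← (strictMonoOn_reduced hA).lt_iff_lt hx hr, (poly_eq_zero_iff hx).mp hroot]
  exact (poly_pos_iff hr).mp hpos

end Threshold

open Threshold in
theorem stmt_7 :
    (∀ c : ℝ, 1 < c → ∃! x : ℝ, 1 < x ∧
      ((1 + Real.sqrt (c-1))^2 * x^2 - (c-1)) * (x-1)^2 - (2*x - 1) = 0) ∧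
    (∀ x : ℝ, 1 < x →
      ((1 + Real.sqrt 2)^2 * x^2 - 2) * (x-1)^2 - (2*x - 1) = 0 →
      ((1 + Real.sqrt 2)^2 / 2) * x^2 < 6) := by
  refine ⟨fun c _ => existsUnique_root (by positivity) (c - 1), fun x hx hroot => ?_⟩
  have hs2 : Real.sqrt 2 ^ 2 = 2 := Real.sq_sqrt (by norm_num)
  have hs_lower : 1.4142 < Real.sqrt 2 := by nlinarith [Real.sqrt_nonneg 2]
  have hs_upper : Real.sqrt 2 < 1.4143 := by nlinarith [Real.sqrt_nonneg 2]
  have hA : (1 + Real.sqrt 2) ^ 2 = 3 + 2 * Real.sqrt 2 := by nlinarith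
  have hx_lt : x < 1.434 := by
    refine root_lt_of_poly_pos (by positivity) hx hroot (by norm_num) ?_
    rw [poly, hA]
    nlinarith
  rw [hA]
  nlinarith
end

section
/- For every real c > 1 the value Φ(c) is strictly greater than Ψ(c), where Φ(c) = ((1+√((c−1)/2))²/((c−1)/2))·(x_Φ)² with x_Φ the unique root > 1 of [(1+√((c−1)/2))²x² − (c−1)/2](x−1)² − (2x−1) = 0, and Ψ(c) = ((1+√(c−1))²/(c−1))·(x_Ψ)² with x_Ψ the unique root > 1 of [(1+√(c−1))²x² − (c−1)](x−1)² − (2x−1) = 0. -/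
/-!
With `t = (c-1)/2` resp. `t = c-1`, dividing the root equation by `(x-1)^2` gives
`rootFn t x = 0`, and `rootFn t x = x^2 + 2√t x^2 + t (x^2 - 1) - (2x-1)/(x-1)^2` is strictly
increasing both in `x > 1` and in `t ≥ 0`. So the larger parameter `c-1` has the smaller root,
`xΨ < xΦ`. The coefficient `(1+√t)^2/t = (1 + 1/√t)^2` is strictly decreasing in `t`, so both
factors of `Ψ(c)` are smaller than those of `Φ(c)`.
-/

noncomputable def rootFn (t x : ℝ) : ℝ := (1 + √t) ^ 2 * x ^ 2 - t - (2 * x - 1) / (x - 1) ^ 2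

lemma rootFn_eq_zero_of_root {t x : ℝ} (hx : 1 < x)
    (h : ((1 + √t) ^ 2 * x ^ 2 - t) * (x - 1) ^ 2 - (2 * x - 1) = 0) : rootFn t x = 0 := by
  have hx1 : (x - 1) ^ 2 ≠ 0 := by positivity
  rw [rootFn, sub_eq_zero, eq_div_iff hx1]
  linarith

lemma div_sub_one_sq_strictAntiOn :
    StrictAntiOn (fun x : ℝ => (2 * x - 1) / (x - 1) ^ 2) (Set.Ioi 1) := by
  intro x (hx : 1 < x) y (hy : 1 < y) hxy
  have hx1 : 0 < (x - 1) ^ 2 := by nlinarith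
  have hy1 : 0 < (y - 1) ^ 2 := by nlinarith
  rw [div_lt_div_iff₀ hy1 hx1]
  have hpos : 0 < 2 * x * y - x - y := by nlinarith
  nlinarith [mul_pos (sub_pos.mpr hxy) hpos]

lemma rootFn_strictMonoOn {t : ℝ} : StrictMonoOn (rootFn t) (Set.Ioi 1) := by
  intro x (hx : 1 < x) y (hy : 1 < y) hxy
  have hsq : (1 + √t) ^ 2 * x ^ 2 < (1 + √t) ^ 2 * y ^ 2 := by gcongr
  have := div_sub_one_sq_strictAntiOn (Set.mem_Ioi.mpr hx) (Set.mem_Ioi.mpr hy) hxy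
  simp only [rootFn] at this ⊢
  linarith

lemma rootFn_lt_of_lt {t u x : ℝ} (ht : 0 ≤ t) (htu : t < u) (hx : 1 < x) :
    rootFn t x < rootFn u x := by
  have expand : ∀ r, 0 ≤ r →
      rootFn r x = x ^ 2 + 2 * √r * x ^ 2 + r * (x ^ 2 - 1) - (2 * x - 1) / (x - 1) ^ 2 := by
    intro r hr
    simp only [rootFn]
    linear_combination x ^ 2 * Real.sq_sqrt hr
  have hsqrt : √t < √u := Real.sqrt_lt_sqrt ht htu
  have hx2 : 0 < x ^ 2 - 1 := by nlinarith
  rw [expand t ht, expand u (ht.trans htu.le)]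
  nlinarith [mul_lt_mul_of_pos_right hsqrt (by positivity : 0 < x ^ 2),
    mul_lt_mul_of_pos_right htu hx2]

lemma root_lt_root {t u x y : ℝ} (ht : 0 ≤ t) (htu : t < u) (hx : 1 < x) (hy : 1 < y)
    (hxroot : rootFn t x = 0) (hyroot : rootFn u y = 0) : y < x := by
  by_contra! hxy
  have := (rootFn_strictMonoOn (t := t)).monotoneOn
    (Set.mem_Ioi.mpr hx) (Set.mem_Ioi.mpr hy) hxy
  linarith [rootFn_lt_of_lt ht htu hy]

lemma one_add_sqrt_sq_div_strictAntiOn :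
    StrictAntiOn (fun t : ℝ => (1 + √t) ^ 2 / t) (Set.Ioi 0) := by
  have hform : ∀ t : ℝ, 0 < t → (1 + √t) ^ 2 / t = (1 + (√t)⁻¹) ^ 2 := by
    intro t ht
    have hs : 0 < √t := Real.sqrt_pos.mpr ht
    rw [div_eq_iff ht.ne', ← Real.sq_sqrt ht.le, Real.sqrt_sq hs.le]
    field_simp
    ring
  intro t (ht : 0 < t) u (hu : 0 < u) htu
  simp only [hform t ht, hform u hu]
  have : (√u)⁻¹ < (√t)⁻¹ :=
    inv_strictAnti₀ (Real.sqrt_pos.mpr ht) (Real.sqrt_lt_sqrt ht.le htu)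
  gcongr

theorem stmt_16 (c xΦ xΨ : ℝ) (hc : 1 < c)
    (hxΦ : 1 < xΦ)
    (hΦroot : ((1 + Real.sqrt ((c-1)/2))^2 * xΦ^2 - (c-1)/2) * (xΦ-1)^2 - (2*xΦ - 1) = 0)
    (hxΨ : 1 < xΨ)
    (hΨroot : ((1 + Real.sqrt (c-1))^2 * xΨ^2 - (c-1)) * (xΨ-1)^2 - (2*xΨ - 1) = 0) :
    ((1 + Real.sqrt (c-1))^2 / (c-1)) * xΨ^2 <
      ((1 + Real.sqrt ((c-1)/2))^2 / ((c-1)/2)) * xΦ^2 := by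
  have ha : 0 < (c - 1) / 2 := by linarith
  have hab : (c - 1) / 2 < c - 1 := by linarith
  have hroots : xΨ < xΦ := root_lt_root ha.le hab hxΦ hxΨ
    (rootFn_eq_zero_of_root hxΦ hΦroot) (rootFn_eq_zero_of_root hxΨ hΨroot)
  have hcoef := one_add_sqrt_sq_div_strictAntiOn (Set.mem_Ioi.mpr ha)
    (Set.mem_Ioi.mpr (ha.trans hab)) hab
  exact mul_lt_mul'' hcoef (by gcongr) (by positivity) (by positivity)
end

section
/- Let (M,d) be a metric space, X a finite subset containing at most z outliers, C* a set of centers with every inlier at distance at most r_max from C*, and let o be an outlier whose 2z-th nearest-neighbor distance in X is at most 2·r_max. Then d(o, C*) ≤ 3·r_max. -/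
/-! Since the `2z`-th smallest distance from `o` is at most `2·rmax`, the ball of radius `2·rmax`
around `o` holds at least `2z` points of `X`; at most `z` of them are outliers, so it contains an
inlier `x`, and `d(o, C*) ≤ d(x, C*) + d(o, x) ≤ rmax + 2·rmax`. -/

theorem List.succ_le_countP_of_pairwise_of_getElem_le {α : Type*} [LinearOrder α]
    {l : List α} (hl : l.Pairwise (· ≤ ·)) {k : ℕ} (hk : k < l.length) {r : α}
    (h : l[k] ≤ r) : k + 1 ≤ l.countP (fun a => decide (a ≤ r)) := by
  have htake : ∀ a ∈ l.take (k + 1), a ≤ r := by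
    intro a ha
    obtain ⟨i, hi, rfl⟩ := List.mem_take_iff_getElem.mp ha
    exact (hl.rel_get_of_le (a := ⟨i, by omega⟩) (b := ⟨k, hk⟩) (by simp; omega)).trans h
  calc k + 1 = (l.take (k + 1)).countP (fun a => decide (a ≤ r)) := by
        rw [List.countP_eq_length.mpr (by simpa using htake), List.length_take]; omega
    _ ≤ l.countP (fun a => decide (a ≤ r)) := (List.take_sublist _ _).countP_le

theorem Multiset.succ_le_countP_of_getD_sort_le {α : Type*} [LinearOrder α]
    {m : Multiset α} {k : ℕ} (hk : k < Multiset.card m) {r d : α}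
    (h : (m.sort (· ≤ ·)).getD k d ≤ r) : k + 1 ≤ m.countP (· ≤ r) := by
  have hk' : k < (m.sort (· ≤ ·)).length := by rwa [Multiset.length_sort]
  rw [List.getD_eq_getElem _ _ hk'] at h
  rw [← Multiset.sort_eq m (· ≤ ·), Multiset.coe_countP]
  exact List.succ_le_countP_of_pairwise_of_getElem_le (Multiset.pairwise_sort _ _) hk' h

theorem Finset.exists_mem_sdiff_of_card_lt_card_filter {α : Type*} [DecidableEq α]
    {s t : Finset α} {p : α → Prop} [DecidablePred p] (h : t.card < (s.filter p).card) :
    ∃ x ∈ s \ t, p x := by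
  obtain ⟨x, hx⟩ : ((s.filter p) \ t).Nonempty := by
    rw [← Finset.card_pos]
    have := Finset.le_card_sdiff t (s.filter p)
    omega
  simp only [Finset.mem_sdiff, Finset.mem_filter] at hx
  exact ⟨x, Finset.mem_sdiff.mpr ⟨hx.1.1, hx.2⟩, hx.1.2⟩

theorem stmt_19_general {M : Type*} [MetricSpace M] [DecidableEq M]
    (X Z : Finset M) (z : ℕ) (hz : 0 < z) (hZ : Z.card ≤ z)
    (h2z : 2*z ≤ X.card)
    (Cs : Finset M) (rmax : ℝ)
    (hin : ∀ x ∈ X \ Z, Metric.infDist x (↑Cs : Set M) ≤ rmax)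
    (o : M)
    (hro : ((X.val.map fun y => dist o y).sort (· ≤ ·)).getD (2*z - 1) 0 ≤ 2 * rmax) :
    Metric.infDist o (↑Cs : Set M) ≤ 3 * rmax := by
  have hball : 2 * z ≤ (X.filter fun y => dist o y ≤ 2 * rmax).card := by
    have := Multiset.succ_le_countP_of_getD_sort_le (by simp; omega) hro
    rwa [Nat.sub_add_cancel (by omega), Multiset.countP_map] at this
  obtain ⟨x, hx, hox⟩ :=
    Finset.exists_mem_sdiff_of_card_lt_card_filter (t := Z) (lt_of_lt_of_le (by omega) hball)
  calc Metric.infDist o Cs ≤ Metric.infDist x Cs + dist o x := Metric.infDist_le_infDist_add_dist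
    _ ≤ rmax + 2 * rmax := add_le_add (hin x hx) hox
    _ = 3 * rmax := by ring

theorem stmt_19 {M : Type*} [MetricSpace M] [DecidableEq M]
    (X Z : Finset M) (hZX : Z ⊆ X) (z : ℕ) (hz : 0 < z) (hZ : Z.card ≤ z)
    (h2z : 2*z ≤ X.card)
    (Cs : Finset M) (hCs : Cs.Nonempty) (rmax : ℝ)
    (hin : ∀ x ∈ X \ Z, Metric.infDist x (↑Cs : Set M) ≤ rmax)
    (o : M) (ho : o ∈ Z)
    (hro : ((X.val.map fun y => dist o y).sort (· ≤ ·)).getD (2*z - 1) 0 ≤ 2 * rmax) :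
    Metric.infDist o (↑Cs : Set M) ≤ 3 * rmax :=
  stmt_19_general X Z z hz hZ h2z Cs rmax hin o hro
end
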